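/- Under the hypotheses that ε ∼ N(0, σ_ε²), κ is a continuous random variable with strictly increasing CDF and finite positive variance, and (Φ⁻¹(F_κ(κ)), ε/σ_ε) is bivariate standard normal with correlation ρ*, the Pearson correlation between κ and ε is zero if and only if ρ* = 0. -/

import Mathlib

open MeasureTheory ProbabilityTheory Set

noncomputable def stdphi (x : ℝ) : ℝ := Real.exp (-(x ^ 2) / 2) / Real.sqrt (2 * Real.pi)

noncomputable def stdPhi (x : ℝ) : ℝ := ∫ t in Set.Iic x, stdphi t

noncomputable def quantile (F : ℝ → ℝ) (p : ℝ) : ℝ := sInf {x : ℝ | p ≤ F x}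

noncomputable def stdPhiInv (p : ℝ) : ℝ := quantile stdPhi p

noncomputable def biphi (r k e : ℝ) : ℝ :=
  Real.exp (-((k ^ 2 - 2 * r * k * e + e ^ 2) / (2 * (1 - r ^ 2)))) /
    (2 * Real.pi * Real.sqrt (1 - r ^ 2))

section Aux

open Real
open scoped ENNReal NNReal

/-! ### Facts about the standard normal pdf and cdf -/

lemma stdphi_eq' : stdphi = gaussianPDFReal 0 1 := by
  funext x
  simp [stdphi, gaussianPDFReal, div_eq_inv_mul]

lemma stdphi_pos (x : ℝ) : 0 < stdphi x := by
  rw [stdphi_eq']; exact gaussianPDFReal_pos _ _ _ one_ne_zero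

lemma stdphi_neg_eq (x : ℝ) : stdphi (-x) = stdphi x := by
  simp [stdphi, neg_sq]

lemma integrable_stdphi : Integrable stdphi := by
  rw [stdphi_eq']; exact integrable_gaussianPDFReal 0 1

lemma integral_stdphi : ∫ x, stdphi x = 1 := by
  rw [stdphi_eq']; exact integral_gaussianPDFReal_eq_one 0 one_ne_zero

lemma stdPhi_eq_gauss (x : ℝ) : stdPhi x = ((gaussianReal 0 1) (Iic x)).toReal := by
  rw [gaussianReal_apply_eq_integral 0 one_ne_zero, ENNReal.toReal_ofReal]
  · rw [stdPhi, stdphi_eq']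
  · rw [← stdphi_eq']
    exact setIntegral_nonneg measurableSet_Iic fun y _ => (stdphi_pos y).le

lemma stdPhi_strictMono : StrictMono stdPhi := by
  intro a b hab
  have hsub : stdPhi b - stdPhi a = ∫ x in a..b, stdphi x :=
    intervalIntegral.integral_Iic_sub_Iic integrable_stdphi.integrableOn
      integrable_stdphi.integrableOn
  have hpos : 0 < ∫ x in a..b, stdphi x :=
    intervalIntegral.intervalIntegral_pos_of_pos
      (integrable_stdphi.intervalIntegrable) (fun x => stdphi_pos x) hab
  linarith [hsub, hpos]

lemma stdPhi_continuous : Continuous stdPhi := by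
  have h : ∀ x : ℝ, stdPhi x = stdPhi 0 + ∫ t in (0:ℝ)..x, stdphi t := by
    intro x
    have := intervalIntegral.integral_Iic_sub_Iic (f := stdphi) (μ := volume) (a := (0:ℝ))
      (b := x) integrable_stdphi.integrableOn integrable_stdphi.integrableOn
    simp only [stdPhi]
    linarith [this]
  have : stdPhi = fun x => stdPhi 0 + ∫ t in (0:ℝ)..x, stdphi t := funext h
  rw [this]
  exact continuous_const.add (integrable_stdphi.continuous_primitive 0)

lemma stdPhi_tendsto_atTop : Filter.Tendsto stdPhi Filter.atTop (nhds 1) := by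
  have h1 : Filter.Tendsto (fun x => (gaussianReal 0 1) (Iic x)) Filter.atTop
      (nhds ((gaussianReal 0 1) univ)) := tendsto_measure_Iic_atTop _
  have h2 : Filter.Tendsto (fun x => ((gaussianReal 0 1) (Iic x)).toReal) Filter.atTop
      (nhds ((gaussianReal 0 1) univ).toReal) :=
    (ENNReal.tendsto_toReal (measure_ne_top _ _)).comp h1
  have e : stdPhi = fun x => ((gaussianReal 0 1) (Iic x)).toReal := funext stdPhi_eq_gauss
  rw [e]
  simpa using h2

lemma stdPhi_tendsto_atBot : Filter.Tendsto stdPhi Filter.atBot (nhds 0) := by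
  have h1 : Filter.Tendsto (fun x => (gaussianReal 0 1) (Iic x)) Filter.atBot
      (nhds ((gaussianReal 0 1) (⋂ x : ℝ, Iic x))) :=
    tendsto_measure_iInter_atBot (fun i => measurableSet_Iic.nullMeasurableSet)
      (fun a b hab => Iic_subset_Iic.mpr hab) ⟨0, measure_ne_top _ _⟩
  have h2 : (⋂ x : ℝ, Iic x) = (∅ : Set ℝ) := by
    ext y; simp only [mem_iInter, mem_Iic, mem_empty_iff_false, iff_false, not_forall]
    exact ⟨y - 1, by linarith⟩
  rw [h2] at h1; simp only [measure_empty] at h1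
  have h3 : Filter.Tendsto (fun x => ((gaussianReal 0 1) (Iic x)).toReal) Filter.atBot
      (nhds (0 : ℝ≥0∞).toReal) := (ENNReal.tendsto_toReal (a := 0) (by simp)).comp h1
  have e : stdPhi = fun x => ((gaussianReal 0 1) (Iic x)).toReal := funext stdPhi_eq_gauss
  rw [e]
  simpa using h3

lemma stdPhi_nonneg (x : ℝ) : 0 ≤ stdPhi x :=
  setIntegral_nonneg measurableSet_Iic fun y _ => (stdphi_pos y).le

lemma stdPhi_le_one (x : ℝ) : stdPhi x ≤ 1 := by
  rw [stdPhi_eq_gauss]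
  exact ENNReal.toReal_le_of_le_ofReal one_pos.le (by simpa using prob_le_one)

lemma stdPhi_mem_Ioo (x : ℝ) : stdPhi x ∈ Ioo (0:ℝ) 1 := by
  constructor
  · exact lt_of_le_of_lt (stdPhi_nonneg (x - 1)) (stdPhi_strictMono (by linarith))
  · exact lt_of_lt_of_le (stdPhi_strictMono (show x < x + 1 by linarith)) (stdPhi_le_one (x + 1))

lemma stdPhi_exists (p : ℝ) (hp : p ∈ Ioo (0:ℝ) 1) : ∃ x, stdPhi x = p := by
  obtain ⟨a, ha⟩ : ∃ a, stdPhi a < p :=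
    (stdPhi_tendsto_atBot.eventually (eventually_lt_nhds hp.1)).exists
  obtain ⟨b, hb⟩ : ∃ b, p < stdPhi b :=
    (stdPhi_tendsto_atTop.eventually (eventually_gt_nhds hp.2)).exists
  exact intermediate_value_univ a b stdPhi_continuous ⟨ha.le, hb.le⟩

lemma stdPhiInv_spec {p : ℝ} (hp : p ∈ Ioo (0:ℝ) 1) : stdPhi (stdPhiInv p) = p := by
  obtain ⟨x, hx⟩ := stdPhi_exists p hp
  have hset : {y : ℝ | p ≤ stdPhi y} = Ici x := by
    ext y
    simp only [mem_setOf_eq, mem_Ici, ← hx, stdPhi_strictMono.le_iff_le]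
  rw [stdPhiInv, quantile, hset, csInf_Ici, hx]

/-! ### Gaussian mean computations -/

lemma integral_id_mul_exp_neg_mul_sq {b : ℝ} (hb : 0 < b) :
    ∫ x : ℝ, x * rexp (-b * x ^ 2) = 0 := by
  have h := MeasureTheory.integral_neg_eq_self (fun t : ℝ => t * rexp (-b * t ^ 2)) volume
  simp only [neg_sq, neg_mul] at h
  rw [integral_neg] at h
  simp only [neg_mul]
  linarith

lemma gaussianPDFReal_comp_add (m : ℝ) (v : ℝ≥0) (t : ℝ) :
    gaussianPDFReal m v (t + m) = (√(2 * π * v))⁻¹ * rexp (-(2 * (v:ℝ))⁻¹ * t ^ 2) := by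
  rw [gaussianPDFReal]
  congr 1
  rw [show t + m - m = t by ring]
  congr 1
  field_simp

lemma integrable_id_mul_gaussianPDFReal (m : ℝ) (v : ℝ≥0) (hv : v ≠ 0) :
    Integrable (fun y : ℝ => y * gaussianPDFReal m v y) := by
  have hv' : (0:ℝ) < (v:ℝ) := by positivity
  have hb : (0:ℝ) < (2 * (v:ℝ))⁻¹ := by positivity
  have h1 : Integrable (fun t : ℝ => (t + m) * gaussianPDFReal m v (t + m)) := by
    have : (fun t : ℝ => (t + m) * gaussianPDFReal m v (t + m))
        = fun t : ℝ => (√(2 * π * v))⁻¹ * (t * rexp (-(2 * (v:ℝ))⁻¹ * t ^ 2))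
          + m * ((√(2 * π * v))⁻¹ * rexp (-(2 * (v:ℝ))⁻¹ * t ^ 2)) := by
      funext t; rw [gaussianPDFReal_comp_add]; ring
    rw [this]
    exact (((integrable_mul_exp_neg_mul_sq hb).const_mul _).add
      (((integrable_exp_neg_mul_sq hb).const_mul _).const_mul _))
  have := h1.comp_add_right (-m)
  simpa using this

lemma integral_id_mul_gaussianPDFReal (m : ℝ) (v : ℝ≥0) (hv : v ≠ 0) :
    ∫ y : ℝ, y * gaussianPDFReal m v y = m := by
  have hv' : (0:ℝ) < (v:ℝ) := by positivity
  have hb : (0:ℝ) < (2 * (v:ℝ))⁻¹ := by positivity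
  have h0 := MeasureTheory.integral_add_right_eq_self
    (μ := volume) (fun y : ℝ => y * gaussianPDFReal m v y) m
  rw [← h0]
  have h2 : ∀ t : ℝ, (t + m) * gaussianPDFReal m v (t + m)
      = (√(2 * π * v))⁻¹ * (t * rexp (-(2 * (v:ℝ))⁻¹ * t ^ 2))
        + m * gaussianPDFReal m v (t + m) := by
    intro t; rw [gaussianPDFReal_comp_add]; ring
  rw [integral_congr_ae (Filter.Eventually.of_forall h2)]
  rw [integral_add (((integrable_mul_exp_neg_mul_sq hb).const_mul _))
    (((integrable_gaussianPDFReal m v).comp_add_right m).const_mul m)]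
  rw [integral_const_mul, integral_const_mul, integral_id_mul_exp_neg_mul_sq hb,
    MeasureTheory.integral_add_right_eq_self (gaussianPDFReal m v) m,
    integral_gaussianPDFReal_eq_one m hv]
  ring

lemma integral_id_gaussianReal' (m : ℝ) (v : ℝ≥0) (hv : v ≠ 0) :
    ∫ x, x ∂(gaussianReal m v) = m := by
  rw [gaussianReal_of_var_ne_zero _ hv]
  have hpdf : gaussianPDF m v
      = fun x => ((Real.toNNReal (gaussianPDFReal m v x) : ℝ≥0) : ℝ≥0∞) := rfl
  rw [hpdf, integral_withDensity_eq_integral_smul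
    ((measurable_gaussianPDFReal m v).real_toNNReal) (fun x => x)]
  have : ∀ x : ℝ, (Real.toNNReal (gaussianPDFReal m v x)) • x
      = x * gaussianPDFReal m v x := by
    intro x
    rw [NNReal.smul_def, Real.coe_toNNReal _ (gaussianPDFReal_nonneg m v x), smul_eq_mul,
      mul_comm]
  rw [integral_congr_ae (Filter.Eventually.of_forall this)]
  exact integral_id_mul_gaussianPDFReal m v hv

/-! ### Facts about the bivariate normal density -/

lemma biphi_eq {r : ℝ} (hr : r ∈ Ioo (-1:ℝ) 1) (x y : ℝ) :
    biphi r x y = stdphi x * gaussianPDFReal (r * x) (Real.toNNReal (1 - r ^ 2)) y := by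
  have hv : 0 < 1 - r ^ 2 := by nlinarith [hr.1, hr.2]
  have hsq : Real.sqrt (2 * π) * Real.sqrt (2 * π * (1 - r ^ 2))
      = 2 * π * Real.sqrt (1 - r ^ 2) := by
    rw [← Real.sqrt_mul (by positivity),
      show (2 * π) * (2 * π * (1 - r ^ 2)) = (2 * π) ^ 2 * (1 - r ^ 2) by ring,
      Real.sqrt_mul (sq_nonneg _), Real.sqrt_sq (by positivity)]
  have hexp : rexp (-(x ^ 2) / 2) * rexp (-(y - r * x) ^ 2 / (2 * (1 - r ^ 2)))
      = rexp (-((x ^ 2 - 2 * r * x * y + y ^ 2) / (2 * (1 - r ^ 2)))) := by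
    rw [← Real.exp_add]; congr 1; field_simp; ring
  have h1 : stdphi x * gaussianPDFReal (r * x) (Real.toNNReal (1 - r ^ 2)) y
      = (rexp (-(x ^ 2) / 2) * rexp (-(y - r * x) ^ 2 / (2 * (1 - r ^ 2))))
        / (Real.sqrt (2 * π) * Real.sqrt (2 * π * (1 - r ^ 2))) := by
    rw [stdphi, gaussianPDFReal, Real.coe_toNNReal _ hv.le]; ring
  rw [h1, hexp, hsq, biphi]

lemma toNNReal_ne_zero' {r : ℝ} (hr : r ∈ Ioo (-1:ℝ) 1) :
    Real.toNNReal (1 - r ^ 2) ≠ 0 := by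
  have hv : 0 < 1 - r ^ 2 := by nlinarith [hr.1, hr.2]
  simp only [ne_eq, Real.toNNReal_eq_zero, not_le]
  linarith

lemma biphi_pos {r : ℝ} (hr : r ∈ Ioo (-1:ℝ) 1) (x y : ℝ) : 0 < biphi r x y := by
  rw [biphi_eq hr]
  exact mul_pos (stdphi_pos x) (gaussianPDFReal_pos _ _ _ (toNNReal_ne_zero' hr))

lemma integrable_biphi_snd {r : ℝ} (hr : r ∈ Ioo (-1:ℝ) 1) (x : ℝ) :
    Integrable (fun y => biphi r x y) := by
  simp only [biphi_eq hr]
  exact (integrable_gaussianPDFReal _ _).const_mul _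

lemma integral_biphi_snd {r : ℝ} (hr : r ∈ Ioo (-1:ℝ) 1) (x : ℝ) :
    ∫ y, biphi r x y = stdphi x := by
  simp only [biphi_eq hr]
  rw [integral_const_mul, integral_gaussianPDFReal_eq_one _ (toNNReal_ne_zero' hr), mul_one]

lemma integrable_id_mul_biphi {r : ℝ} (hr : r ∈ Ioo (-1:ℝ) 1) (x : ℝ) :
    Integrable (fun y => y * biphi r x y) := by
  simp only [biphi_eq hr]
  have := (integrable_id_mul_gaussianPDFReal (r * x) _ (toNNReal_ne_zero' hr)).const_mul
    (stdphi x)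
  refine this.congr (Filter.Eventually.of_forall fun y => ?_)
  ring

lemma integral_id_mul_biphi {r : ℝ} (hr : r ∈ Ioo (-1:ℝ) 1) (x : ℝ) :
    ∫ y, y * biphi r x y = r * x * stdphi x := by
  simp only [biphi_eq hr]
  have h : ∀ y : ℝ, y * (stdphi x * gaussianPDFReal (r * x) (Real.toNNReal (1 - r ^ 2)) y)
      = stdphi x * (y * gaussianPDFReal (r * x) (Real.toNNReal (1 - r ^ 2)) y) := by
    intro y; ring
  rw [integral_congr_ae (Filter.Eventually.of_forall h), integral_const_mul,
    integral_id_mul_gaussianPDFReal _ _ (toNNReal_ne_zero' hr)]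
  ring

lemma continuous_biphi (r : ℝ) : Continuous (fun p : ℝ × ℝ => biphi r p.1 p.2) := by
  unfold biphi
  fun_prop

end Aux

theorem stmt_7
    {Ω : Type*} [MeasurableSpace Ω] (P : Measure Ω) [IsProbabilityMeasure P]
    (κ ε : Ω → ℝ) (hκ : Measurable κ) (hε : Measurable ε)
    (σε : ℝ) (hσε : 0 < σε)
    (hεlaw : P.map ε = gaussianReal 0 (Real.toNNReal (σε ^ 2)))
    (F Finv : ℝ → ℝ) (hF : ∀ x, F x = (P (κ ⁻¹' Set.Iic x)).toReal)
    (hFmono : StrictMono F) (hFc : Continuous F)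
    (hFinv : Function.LeftInverse Finv F)
    (μκ σκ : ℝ) (hμκ : μκ = ∫ ω, κ ω ∂P) (hσκ : σκ = Real.sqrt (variance κ P))
    (hσκpos : 0 < σκ) (hκ2 : MemLp κ 2 P)
    (ρstar : ℝ) (hρstar : ρstar ∈ Set.Ioo (-1 : ℝ) 1)
    (hjoint : P.map (fun ω => (stdPhiInv (F (κ ω)), ε ω / σε))
      = (volume : Measure (ℝ × ℝ)).withDensity
          (fun p => ENNReal.ofReal (biphi ρstar p.1 p.2)))
    (hIntprod : Integrable (fun ω => κ ω * ε ω) P) :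
    (∫ ω, κ ω * ε ω ∂P - μκ * ∫ ω, ε ω ∂P) / (σκ * σε) = 0 ↔ ρstar = 0 := by
  have hσεne : σε ≠ 0 := ne_of_gt hσε
  -- mean of ε is zero
  have hεmean : ∫ ω, ε ω ∂P = 0 := by
    have h1 : ∫ x, x ∂(P.map ε) = ∫ ω, ε ω ∂P :=
      integral_map hε.aemeasurable aestronglyMeasurable_id
    rw [← h1, hεlaw, integral_id_gaussianReal']
    simp only [ne_eq, Real.toNNReal_eq_zero, not_le]
    positivity
  -- F takes values in (0,1)
  have hFmem : ∀ x, F x ∈ Ioo (0:ℝ) 1 := by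
    intro x
    constructor
    · have h0 : (0:ℝ) ≤ F (x - 1) := by rw [hF]; exact ENNReal.toReal_nonneg
      have := hFmono (show x - 1 < x by linarith)
      linarith
    · have h1 : F (x + 1) ≤ 1 := by
        rw [hF]
        exact ENNReal.toReal_le_of_le_ofReal one_pos.le (by simpa using prob_le_one)
      have := hFmono (show x < x + 1 by linarith)
      linarith
  -- F is surjective onto (0,1)
  have hFmap : ∀ x, F x = ((P.map κ) (Iic x)).toReal := by
    intro x; rw [hF, Measure.map_apply hκ measurableSet_Iic]
  haveI : IsProbabilityMeasure (P.map κ) := Measure.isProbabilityMeasure_map hκ.aemeasurable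
  have hFtop : Filter.Tendsto F Filter.atTop (nhds 1) := by
    have h1 : Filter.Tendsto (fun x => (P.map κ) (Iic x)) Filter.atTop
        (nhds ((P.map κ) univ)) := tendsto_measure_Iic_atTop _
    have h2 : Filter.Tendsto (fun x => ((P.map κ) (Iic x)).toReal) Filter.atTop
        (nhds ((P.map κ) univ).toReal) :=
      (ENNReal.tendsto_toReal (measure_ne_top _ _)).comp h1
    have e : F = fun x => ((P.map κ) (Iic x)).toReal := funext hFmap
    rw [e]
    simpa using h2
  have hFbot : Filter.Tendsto F Filter.atBot (nhds 0) := by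
    have h1 : Filter.Tendsto (fun x => (P.map κ) (Iic x)) Filter.atBot
        (nhds ((P.map κ) (⋂ x : ℝ, Iic x))) :=
      tendsto_measure_iInter_atBot (fun i => measurableSet_Iic.nullMeasurableSet)
        (fun a b hab => Iic_subset_Iic.mpr hab) ⟨0, measure_ne_top _ _⟩
    have h2 : (⋂ x : ℝ, Iic x) = (∅ : Set ℝ) := by
      ext y; simp only [mem_iInter, mem_Iic, mem_empty_iff_false, iff_false, not_forall]
      exact ⟨y - 1, by linarith⟩
    rw [h2] at h1; simp only [measure_empty] at h1
    have h3 : Filter.Tendsto (fun x => ((P.map κ) (Iic x)).toReal) Filter.atBot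
        (nhds (0 : ENNReal).toReal) := (ENNReal.tendsto_toReal (a := 0) (by simp)).comp h1
    have e : F = fun x => ((P.map κ) (Iic x)).toReal := funext hFmap
    rw [e]
    simpa using h3
  have hFsurj : ∀ p ∈ Ioo (0:ℝ) 1, ∃ a, F a = p := by
    intro p hp
    obtain ⟨a, ha⟩ : ∃ a, F a < p := (hFbot.eventually (eventually_lt_nhds hp.1)).exists
    obtain ⟨b, hb⟩ : ∃ b, p < F b := (hFtop.eventually (eventually_gt_nhds hp.2)).exists
    exact intermediate_value_univ a b hFc ⟨ha.le, hb.le⟩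
  -- the transformed variables
  set g : ℝ → ℝ := fun x => Finv (stdPhi x) with hg
  set X : Ω → ℝ := fun ω => stdPhiInv (F (κ ω)) with hX
  have hPhiX : ∀ ω, stdPhi (X ω) = F (κ ω) := fun ω => stdPhiInv_spec (hFmem (κ ω))
  have hgX : ∀ ω, g (X ω) = κ ω := by
    intro ω
    rw [hg]
    simp only
    rw [hPhiX ω, hFinv (κ ω)]
  have hgmono : StrictMono g := by
    intro a b hab
    have h1 : stdPhi a ∈ Ioo (0:ℝ) 1 := stdPhi_mem_Ioo a
    have h2 : stdPhi b ∈ Ioo (0:ℝ) 1 := stdPhi_mem_Ioo b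
    obtain ⟨u, hu⟩ := hFsurj _ h1
    obtain ⟨w, hw⟩ := hFsurj _ h2
    have huw : u < w := by
      rw [← hFmono.lt_iff_lt, hu, hw]
      exact stdPhi_strictMono hab
    have : g a = u := by rw [hg]; simp only; rw [← hu, hFinv]
    have hgbw : g b = w := by rw [hg]; simp only; rw [← hw, hFinv]
    rw [this, hgbw]; exact huw
  have hgmeas : Measurable g := hgmono.monotone.measurable
  have hXmeas : Measurable X := by
    apply measurable_of_Iic
    intro c
    have : X ⁻¹' Iic c = κ ⁻¹' (F ⁻¹' Iic (stdPhi c)) := by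
      ext ω
      simp only [mem_preimage, mem_Iic]
      constructor
      · intro h
        rw [← hPhiX ω]
        exact stdPhi_strictMono.monotone h
      · intro h
        rw [← hPhiX ω] at h
        exact stdPhi_strictMono.le_iff_le.mp h
    rw [this]
    exact hκ (hFc.measurable measurableSet_Iic)
  set pair : Ω → ℝ × ℝ := fun ω => (X ω, ε ω / σε) with hpairdef
  have hpair : Measurable pair := hXmeas.prodMk (hε.div_const σε)
  set h : ℝ × ℝ → ℝ := fun p => g p.1 * (σε * p.2) with hh
  have hhmeas : Measurable h := (hgmeas.comp measurable_fst).mul (measurable_snd.const_mul σε)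
  have hcomp : ∀ ω, h (pair ω) = κ ω * ε ω := by
    intro ω
    rw [hh]
    simp only [hpairdef]
    rw [hgX ω]
    field_simp
  -- Step 1 : push forward
  have step1 : ∫ ω, κ ω * ε ω ∂P = ∫ p, h p ∂(P.map pair) := by
    rw [integral_map hpair.aemeasurable hhmeas.aestronglyMeasurable]
    exact integral_congr_ae (Filter.Eventually.of_forall fun ω => (hcomp ω).symm)
  -- density as NNReal
  set dens : ℝ × ℝ → NNReal := fun p => Real.toNNReal (biphi ρstar p.1 p.2) with hdens
  have hdensmeas : Measurable dens := (continuous_biphi ρstar).measurable.real_toNNReal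
  have hwd : (fun p : ℝ × ℝ => ENNReal.ofReal (biphi ρstar p.1 p.2))
      = fun p => ((dens p : NNReal) : ENNReal) := rfl
  have hsmul : ∀ p : ℝ × ℝ, (dens p) • h p = biphi ρstar p.1 p.2 * h p := by
    intro p
    rw [hdens]
    simp only
    rw [NNReal.smul_def, Real.coe_toNNReal _ (biphi_pos hρstar p.1 p.2).le, smul_eq_mul]
  -- Step 2 : integral against density
  have step2 : ∫ p, h p ∂(P.map pair)
      = ∫ p : ℝ × ℝ, biphi ρstar p.1 p.2 * h p := by
    rw [hjoint, hwd, integral_withDensity_eq_integral_smul hdensmeas h]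
    exact integral_congr_ae (Filter.Eventually.of_forall hsmul)
  -- integrability of the density-weighted integrand
  have int1 : Integrable h (P.map pair) := by
    rw [integrable_map_measure hhmeas.aestronglyMeasurable hpair.aemeasurable]
    exact hIntprod.congr (Filter.Eventually.of_forall fun ω => (hcomp ω).symm)
  have int2 : Integrable (fun p : ℝ × ℝ => biphi ρstar p.1 p.2 * h p) volume := by
    have := int1
    rw [hjoint, hwd, integrable_withDensity_iff_integrable_smul hdensmeas] at this
    exact this.congr (Filter.Eventually.of_forall fun p => hsmul p)
  have int2' : Integrable (fun p : ℝ × ℝ => biphi ρstar p.1 p.2 * h p)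
      ((volume : Measure ℝ).prod volume) := by
    rwa [← MeasureTheory.Measure.volume_eq_prod]
  -- Step 3 : Fubini
  have step3 : ∫ p : ℝ × ℝ, biphi ρstar p.1 p.2 * h p
      = ∫ x : ℝ, ∫ y : ℝ, biphi ρstar x y * h (x, y) := by
    rw [MeasureTheory.Measure.volume_eq_prod]
    exact MeasureTheory.integral_prod _ int2'
  -- Step 4 : inner integral
  have step4 : ∀ x : ℝ, ∫ y : ℝ, biphi ρstar x y * h (x, y)
      = (σε * ρstar) * (x * g x * stdphi x) := by
    intro x
    have hrw : ∀ y : ℝ, biphi ρstar x y * h (x, y)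
        = (g x * σε) * (y * biphi ρstar x y) := by
      intro y; rw [hh]; simp only; ring
    rw [integral_congr_ae (Filter.Eventually.of_forall hrw), integral_const_mul,
      integral_id_mul_biphi hρstar x]
    ring
  -- the key constant
  set C : ℝ := ∫ x : ℝ, x * g x * stdphi x with hC
  have hN : ∫ ω, κ ω * ε ω ∂P = (σε * ρstar) * C := by
    rw [step1, step2, step3]
    rw [integral_congr_ae (Filter.Eventually.of_forall step4), integral_const_mul]
  -- conclude
  rw [hεmean, mul_zero, sub_zero, hN]
  have hden : σκ * σε ≠ 0 := by positivity
  constructor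
  · intro h0
    by_contra hρ0
    -- ρstar ≠ 0, show C > 0, contradiction
    have hρne : ρstar ≠ 0 := hρ0
    have hCint : Integrable (fun x : ℝ => x * g x * stdphi x) := by
      have hmarg := int2'.integral_prod_left
      have : (fun x : ℝ => ∫ y : ℝ, biphi ρstar x y * h (x, y))
          = fun x : ℝ => (σε * ρstar) * (x * g x * stdphi x) := funext step4
      rw [this] at hmarg
      have := hmarg.const_mul (σε * ρstar)⁻¹
      refine this.congr (Filter.Eventually.of_forall fun x => ?_)
      field_simp
    have hCpos : 0 < C := by
      set u : ℝ → ℝ := fun x => x * g x * stdphi x with hu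
      have hsplit : (∫ x in Iic (0:ℝ), u x) + (∫ x in Ioi (0:ℝ), u x) = C :=
        intervalIntegral.integral_Iic_add_Ioi hCint.integrableOn hCint.integrableOn
      have hneg : (∫ x in Iic (0:ℝ), u x) = ∫ x in Ioi (0:ℝ), u (-x) := by
        have := integral_comp_neg_Ioi (0:ℝ) u
        simp only [neg_zero] at this
        exact this.symm
      have hintneg : IntegrableOn (fun x => u (-x)) (Ioi (0:ℝ)) :=
        hCint.comp_neg.integrableOn
      have hsum : (∫ x in Ioi (0:ℝ), u (-x)) + (∫ x in Ioi (0:ℝ), u x)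
          = ∫ x in Ioi (0:ℝ), (u (-x) + u x) :=
        (integral_add hintneg hCint.integrableOn).symm
      have hwpos : ∀ x ∈ Ioi (0:ℝ), 0 < u (-x) + u x := by
        intro x hx
        have hx0 : (0:ℝ) < x := hx
        have hgg : g (-x) < g x := hgmono (by linarith)
        have heq : u (-x) + u x = x * stdphi x * (g x - g (-x)) := by
          rw [hu]; simp only
          rw [stdphi_neg_eq]
          ring
        rw [heq]
        have := mul_pos (mul_pos hx0 (stdphi_pos x)) (sub_pos.mpr hgg)
        linarith
      have hpos : 0 < ∫ x in Ioi (0:ℝ), (u (-x) + u x) := by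
        rw [MeasureTheory.setIntegral_pos_iff_support_of_nonneg_ae]
        · refine lt_of_lt_of_le ?_ (measure_mono (show Ioo (0:ℝ) 1 ⊆
            Function.support (fun x => u (-x) + u x) ∩ Ioi 0 from fun x hx =>
            ⟨ne_of_gt (hwpos x hx.1), hx.1⟩))
          rw [Real.volume_Ioo]
          simp
        · rw [Filter.EventuallyLE, ae_restrict_iff' measurableSet_Ioi]
          exact Filter.Eventually.of_forall fun x hx => (hwpos x hx).le
        · exact hintneg.add hCint.integrableOn
      rw [← hsplit, hneg, hsum]
      exact hpos
    have : σε * ρstar * C ≠ 0 := by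
      apply mul_ne_zero (mul_ne_zero hσεne hρne) (ne_of_gt hCpos)
    rw [div_eq_zero_iff] at h0
    rcases h0 with h0 | h0
    · exact this h0
    · exact hden h0
  · intro h0
    rw [h0]
    simp
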